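/- arXiv:2002.03329 — 7 statements merged into one kernel-verified Lean document; each statement's English description precedes it below -/
import Mathlib

section
/- There exist a 1-smooth function f : ℝ → ℝ bounded below, and an unbiased stochastic gradient g, such that no constants α, β ≥ 0 satisfy E‖g(x)‖² ≤ α‖∇f(x)‖² + β for all x, yet there do exist constants A, C ≥ 0 with E‖g(x)‖² ≤ 2A(f(x) − inf f) + C for all x. Concretely, take f(x) = x²/2 for |x| < 1 and |x| − 1/2 otherwise, and g(x) = ∇f(x) ± √|x| with equal probability. -/
/-!
Writing the Huber function as `x²/2 - (x - 1)₊²/2 - (-x - 1)₊²/2` shows that it is differentiable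
with derivative the clipping `x ↦ max (-1) (min 1 x)`, which is `1`-Lipschitz. The second moment of the stochastic
gradient is `f'(x)² + |x|`: it is unbounded while `f'²` stays below `1`, so no bound
`α f'² + β` can hold; but `f` itself grows like `|x|`, so `|x| ≤ 2 (f x - inf f) + 1`.
-/

open Set

noncomputable def huber (x : ℝ) : ℝ := if |x| < 1 then x ^ 2 / 2 else |x| - 1 / 2

def clip (x : ℝ) : ℝ := max (-1) (min 1 x)

lemma hasDerivAt_max_zero_sq (t : ℝ) :
    HasDerivAt (fun s : ℝ => max s 0 ^ 2) (2 * max t 0) t := by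
  refine hasDerivAt_of_hasDerivAt_of_ne' (f := fun s : ℝ => max s 0 ^ 2)
    (g := fun s => 2 * max s 0) (x := 0) (fun y hy => ?_) (by fun_prop) (by fun_prop) t
  rcases hy.lt_or_gt with hy | hy
  · rw [max_eq_right hy.le, mul_zero]
    refine (hasDerivAt_const y (0 : ℝ)).congr_of_eventuallyEq ?_
    filter_upwards [eventually_lt_nhds hy] with s hs
    rw [max_eq_right hs.le, zero_pow two_ne_zero]
  · rw [max_eq_left hy.le]
    refine (hasDerivAt_pow 2 y).congr_deriv (by ring) |>.congr_of_eventuallyEq ?_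
    filter_upwards [eventually_gt_nhds hy] with s hs
    rw [max_eq_left hs.le]

lemma huber_eq_sq_sub_max_sq (x : ℝ) :
    huber x = x ^ 2 / 2 - max (x - 1) 0 ^ 2 / 2 - max (-x - 1) 0 ^ 2 / 2 := by
  unfold huber
  split_ifs with h
  · obtain ⟨h₁, h₂⟩ := abs_lt.mp h
    rw [max_eq_right (by linarith), max_eq_right (by linarith)]
    ring
  · rcases le_abs'.mp (not_lt.mp h) with hx | hx
    · rw [abs_of_neg (by linarith), max_eq_right (by linarith), max_eq_left (by linarith)]
      ring
    · rw [abs_of_pos (by linarith), max_eq_left (by linarith), max_eq_right (by linarith)]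
      ring

lemma clip_eq_sub_max_add_max (x : ℝ) : clip x = x - max (x - 1) 0 + max (-x - 1) 0 := by
  unfold clip
  rcases le_total x (-1) with hx | hx
  · rw [min_eq_right (by linarith), max_eq_left hx, max_eq_right (by linarith),
      max_eq_left (by linarith)]
    ring
  rcases le_total x 1 with hx' | hx'
  · rw [min_eq_right hx', max_eq_right hx, max_eq_right (by linarith), max_eq_right (by linarith)]
    ring
  · rw [min_eq_left hx', max_eq_right (by norm_num), max_eq_left (by linarith),
      max_eq_right (by linarith)]
    ring

lemma hasDerivAt_huber (x : ℝ) : HasDerivAt huber (clip x) x := by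
  have h := (((hasDerivAt_pow 2 x).div_const 2).sub
    (((hasDerivAt_max_zero_sq (x - 1)).comp x ((hasDerivAt_id x).sub_const 1)).div_const 2)).sub
    (((hasDerivAt_max_zero_sq (-x - 1)).comp x ((hasDerivAt_id x).neg.sub_const 1)).div_const 2)
  rw [funext huber_eq_sq_sub_max_sq, clip_eq_sub_max_add_max]
  exact h.congr_deriv (by norm_num; ring)

lemma lipschitzWith_clip : LipschitzWith 1 clip :=
  (LipschitzWith.id.const_min 1).const_max (-1)

lemma clip_sq_le_one (x : ℝ) : clip x ^ 2 ≤ 1 :=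
  (sq_le_one_iff_abs_le_one _).mpr <|
    abs_le.mpr ⟨le_max_left _ _, max_le (by norm_num) (min_le_left _ _)⟩

lemma clip_of_one_le {x : ℝ} (hx : 1 ≤ x) : clip x = 1 := by
  rw [clip, min_eq_left hx, max_eq_right (by norm_num)]

lemma huber_nonneg (x : ℝ) : 0 ≤ huber x := by
  unfold huber
  split_ifs with h
  · positivity
  · linarith [not_lt.mp h]

lemma isLeast_range_huber : IsLeast (range huber) 0 :=
  ⟨⟨0, by simp [huber]⟩, by rintro _ ⟨x, rfl⟩; exact huber_nonneg x⟩

lemma abs_le_two_mul_huber_add_one (x : ℝ) : |x| ≤ 2 * huber x + 1 := by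
  unfold huber
  split_ifs with h
  · nlinarith [abs_nonneg x]
  · linarith [not_lt.mp h]

theorem stmt9 :
    ∃ f : ℝ → ℝ,
      (f = fun x => if |x| < 1 then x ^ 2 / 2 else |x| - 1 / 2) ∧
      Differentiable ℝ f ∧
      (∀ x y, |deriv f x - deriv f y| ≤ 1 * |x - y|) ∧
      BddBelow (Set.range f) ∧
      (¬ ∃ α β : ℝ, 0 ≤ α ∧ 0 ≤ β ∧ ∀ x,
        (1 / 2) * (deriv f x + Real.sqrt |x|) ^ 2
          + (1 / 2) * (deriv f x - Real.sqrt |x|) ^ 2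
          ≤ α * (deriv f x) ^ 2 + β) ∧
      (∃ A C : ℝ, 0 ≤ A ∧ 0 ≤ C ∧ ∀ x,
        (1 / 2) * (deriv f x + Real.sqrt |x|) ^ 2
          + (1 / 2) * (deriv f x - Real.sqrt |x|) ^ 2
          ≤ 2 * A * (f x - sInf (Set.range f)) + C) := by
  have hderiv : deriv huber = clip := funext fun x => (hasDerivAt_huber x).deriv
  have hmoment (x : ℝ) : (1 / 2) * (clip x + √|x|) ^ 2 + (1 / 2) * (clip x - √|x|) ^ 2
      = clip x ^ 2 + |x| := by
    linear_combination Real.sq_sqrt (abs_nonneg x)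
  refine ⟨huber, rfl, fun x => (hasDerivAt_huber x).differentiableAt, fun x y => ?_,
    isLeast_range_huber.bddBelow, ?_, 1, 2, zero_le_one, zero_le_two, fun x => ?_⟩
  · simpa only [hderiv, ← Real.dist_eq, NNReal.coe_one] using lipschitzWith_clip.dist_le_mul x y
  · rintro ⟨α, β, hα, hβ, h⟩
    have hx : (1 : ℝ) ≤ α + β + 1 := by linarith
    have hfar := h (α + β + 1)
    rw [hderiv, hmoment, clip_of_one_le hx, abs_of_nonneg (by linarith)] at hfar
    linarith
  · rw [hderiv, hmoment, isLeast_range_huber.csInf_eq, sub_zero]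
    linarith [clip_sq_le_one x, abs_le_two_mul_huber_add_one x]
end

section
/- For the function f(x) = x²/2 if |x| < 1 and |x| − 1/2 otherwise, and g(x) = ∇f(x) ± √|x| with equal probability, the bound E‖g(x)‖² ≤ (f(x) − inf f) + 2 holds for all x ∈ ℝ. -/
noncomputable def F : ℝ → ℝ := fun x => if |x| < 1 then x ^ 2 / 2 else |x| - 1 / 2

lemma F_nonneg (x : ℝ) : 0 ≤ F x := by
  unfold F
  split
  · positivity
  · next h =>
    have : (1:ℝ) ≤ |x| := not_lt.mp h
    linarith

lemma hderiv (x : ℝ) : HasDerivAt F (max (-1) (min 1 x)) x := by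
  have hsq : ∀ y : ℝ, HasDerivAt (fun z : ℝ => z ^ 2 / 2) y y := by
    intro y
    have := (hasDerivAt_pow 2 y).div_const 2
    simpa using this
  rcases lt_trichotomy x (-1) with hx | hx | hx
  · -- x < -1
    have hg : HasDerivAt (fun z : ℝ => -z - 1/2) (-1) x := by
      simpa using ((hasDerivAt_id x).neg.sub_const (1/2 : ℝ))
    have heq : F =ᶠ[nhds x] (fun z : ℝ => -z - 1/2) := by
      filter_upwards [Iio_mem_nhds hx] with y hy
      have hy' : y < -1 := hy
      have h1 : ¬ |y| < 1 := by rw [abs_of_neg (by linarith)]; push_neg; linarith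
      simp only [F]; rw [if_neg h1, abs_of_neg (by linarith : y < 0)]
    have hval : max (-1 : ℝ) (min 1 x) = -1 := by
      rw [min_eq_right (by linarith), max_eq_left (by linarith)]
    rw [hval]
    exact hg.congr_of_eventuallyEq heq
  · -- x = -1
    subst hx
    have hval : max (-1 : ℝ) (min 1 (-1 : ℝ)) = -1 := by norm_num
    rw [hval]
    have h1 : HasDerivWithinAt F (-1) (Set.Iic (-1 : ℝ)) (-1) := by
      have hg : HasDerivWithinAt (fun z : ℝ => -z - 1/2) (-1) (Set.Iic (-1 : ℝ)) (-1) := by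
        have : HasDerivAt (fun z : ℝ => -z - 1/2) (-1) (-1 : ℝ) := by
          simpa using ((hasDerivAt_id (-1 : ℝ)).neg.sub_const (1/2 : ℝ))
        exact this.hasDerivWithinAt
      refine hg.congr (fun y hy => ?_) (by norm_num [F])
      have hy' : y ≤ -1 := hy
      have h1 : ¬ |y| < 1 := by rw [abs_of_neg (by linarith)]; push_neg; linarith
      simp only [F]; rw [if_neg h1, abs_of_neg (by linarith : y < 0)]
    have h2 : HasDerivWithinAt F (-1) (Set.Ici (-1 : ℝ)) (-1) := by
      have hg : HasDerivWithinAt (fun z : ℝ => z ^ 2 / 2) (-1) (Set.Ici (-1 : ℝ)) (-1) :=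
        (hsq (-1)).hasDerivWithinAt
      refine hg.congr_of_eventuallyEq ?_ (by norm_num [F])
      have hmem : Set.Iio (1 : ℝ) ∈ nhdsWithin (-1 : ℝ) (Set.Ici (-1 : ℝ)) :=
        mem_nhdsWithin_of_mem_nhds (Iio_mem_nhds (by norm_num))
      filter_upwards [hmem, self_mem_nhdsWithin] with y hy1 hy2
      have hy' : (-1 : ℝ) ≤ y := hy2
      rcases eq_or_lt_of_le hy' with h | h
      · simp [F, ← h]; norm_num
      · have : |y| < 1 := abs_lt.mpr ⟨h, hy1⟩
        simp [F, this]
    have := h1.union h2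
    rw [Set.Iic_union_Ici] at this
    simpa [hasDerivWithinAt_univ] using this
  · rcases lt_trichotomy x 1 with hx1 | hx1 | hx1
    · -- -1 < x < 1
      have hval : max (-1 : ℝ) (min 1 x) = x := by
        rw [min_eq_right (by linarith), max_eq_right (by linarith)]
      rw [hval]
      have heq : F =ᶠ[nhds x] (fun z : ℝ => z ^ 2 / 2) := by
        filter_upwards [Ioo_mem_nhds hx hx1] with y hy
        have : |y| < 1 := abs_lt.mpr ⟨hy.1, hy.2⟩
        simp [F, this]
      exact (hsq x).congr_of_eventuallyEq heq
    · -- x = 1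
      subst hx1
      have hval : max (-1 : ℝ) (min 1 (1 : ℝ)) = 1 := by norm_num
      rw [hval]
      have h1 : HasDerivWithinAt F 1 (Set.Ici (1 : ℝ)) 1 := by
        have hg : HasDerivWithinAt (fun z : ℝ => z - 1/2) 1 (Set.Ici (1 : ℝ)) 1 := by
          have : HasDerivAt (fun z : ℝ => z - 1/2) 1 (1 : ℝ) := by
            simpa using ((hasDerivAt_id (1 : ℝ)).sub_const (1/2 : ℝ))
          exact this.hasDerivWithinAt
        refine hg.congr (fun y hy => ?_) (by norm_num [F])
        have hy' : (1:ℝ) ≤ y := hy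
        have h1 : ¬ |y| < 1 := by rw [abs_of_pos (by linarith)]; push_neg; linarith
        simp only [F]; rw [if_neg h1, abs_of_pos (by linarith : (0:ℝ) < y)]
      have h2 : HasDerivWithinAt F 1 (Set.Iic (1 : ℝ)) 1 := by
        have hg : HasDerivWithinAt (fun z : ℝ => z ^ 2 / 2) 1 (Set.Iic (1 : ℝ)) 1 :=
          (hsq 1).hasDerivWithinAt
        refine hg.congr_of_eventuallyEq ?_ (by norm_num [F])
        have hmem : Set.Ioi (-1 : ℝ) ∈ nhdsWithin (1 : ℝ) (Set.Iic (1 : ℝ)) :=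
          mem_nhdsWithin_of_mem_nhds (Ioi_mem_nhds (by norm_num))
        filter_upwards [hmem, self_mem_nhdsWithin] with y hy1 hy2
        have hy' : y ≤ 1 := hy2
        rcases eq_or_lt_of_le hy' with h | h
        · simp [F, h]; norm_num
        · have : |y| < 1 := abs_lt.mpr ⟨hy1, h⟩
          simp [F, this]
      have := h2.union h1
      rw [Set.Iic_union_Ici] at this
      simpa [hasDerivWithinAt_univ] using this
    · -- 1 < x
      have hval : max (-1 : ℝ) (min 1 x) = 1 := by
        rw [min_eq_left (by linarith), max_eq_right (by linarith)]
      rw [hval]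
      have hg : HasDerivAt (fun z : ℝ => z - 1/2) 1 x := by
        simpa using ((hasDerivAt_id x).sub_const (1/2 : ℝ))
      have heq : F =ᶠ[nhds x] (fun z : ℝ => z - 1/2) := by
        filter_upwards [Ioi_mem_nhds hx1] with y hy
        have hy' : (1:ℝ) < y := hy
        have h1 : ¬ |y| < 1 := by rw [abs_of_pos (by linarith)]; push_neg; linarith
        simp only [F]; rw [if_neg h1, abs_of_pos (by linarith : (0:ℝ) < y)]
      exact hg.congr_of_eventuallyEq heq

lemma sInf_range_F : sInf (Set.range F) = 0 := by
  apply le_antisymm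
  · have h0 : F 0 = 0 := by norm_num [F]
    have := csInf_le ⟨(0:ℝ), fun y hy => by obtain ⟨x, rfl⟩ := hy; exact F_nonneg x⟩
      (Set.mem_range_self (0:ℝ))
    simpa [h0] using this
  · exact le_csInf ⟨F 0, Set.mem_range_self (0:ℝ)⟩
      (fun y hy => by obtain ⟨x, rfl⟩ := hy; exact F_nonneg x)

theorem stmt10 (f : ℝ → ℝ)
    (hf : f = fun x => if |x| < 1 then x ^ 2 / 2 else |x| - 1 / 2) :
    ∀ x, (1 / 2) * (deriv f x + Real.sqrt |x|) ^ 2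
        + (1 / 2) * (deriv f x - Real.sqrt |x|) ^ 2
      ≤ (f x - sInf (Set.range f)) + 2 := by
  have hfF : f = F := hf
  subst hfF
  intro x
  have hd : deriv F x = max (-1) (min 1 x) := (hderiv x).deriv
  have hs : Real.sqrt |x| ^ 2 = |x| := Real.sq_sqrt (abs_nonneg x)
  rw [sInf_range_F, hd]
  have key : (max (-1) (min 1 x)) ^ 2 + |x| ≤ F x + 2 := by
    rcases le_or_gt 1 (|x|) with h | h
    · have hm : (max (-1) (min 1 x)) ^ 2 ≤ 1 := by
        have h1 : -1 ≤ max (-1 : ℝ) (min 1 x) := le_max_left _ _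
        have h2 : max (-1 : ℝ) (min 1 x) ≤ 1 :=
          max_le (by norm_num) (min_le_left _ _)
        nlinarith
      have hF : F x = |x| - 1/2 := by simp [F, not_lt.mpr h]
      rw [hF]; linarith
    · have hm : max (-1 : ℝ) (min 1 x) = x := by
        rw [min_eq_right (abs_le.mp h.le).2, max_eq_right (abs_le.mp h.le).1]
      have hF : F x = x ^ 2 / 2 := by simp [F, h]
      rw [hm, hF]
      have := sq_abs x
      nlinarith [abs_nonneg x]
  nlinarith [hs, key]
end

section
/- Suppose f is L-smooth, bounded below by f_inf, and the stochastic gradient g is unbiased and satisfies E‖g(x)‖² ≤ 2A(f(x) − f_inf) + B‖∇f(x)‖² + C. For SGD x_{k+1} = x_k − γg(x_k) with constant stepsize 0 < γ ≤ 1/(BL), one has min_{0≤k≤K−1} E‖∇f(x_k)‖² ≤ LCγ + 2(1 + Lγ²A)^K (f(x₀) − f_inf)/(γK). -/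
/-!
Taking conditional expectations given `x_k` in the descent lemma
`f (x - γ g) ≤ f x - γ ⟪∇f x, g⟫ + L γ² ‖g‖² / 2`, unbiasedness turns the cross term into
`E ‖∇f x_k‖²` and expected smoothness bounds `E ‖g_k‖²`. With `γ B L ≤ 1` this gives the recursion
`δ_{k+1} ≤ (1 + L γ² A) δ_k - γ/2 E ‖∇f x_k‖² + L γ² C / 2` for `δ_k = E f x_k - f_inf`, and
weighting step `k` by `(1 + L γ² A)^{-(k+1)}` makes it telescope.
-/

open MeasureTheory InnerProductSpace Finset
open scoped RealInnerProductSpace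

section LipschitzGradient

variable {E : Type*} [NormedAddCommGroup E] [InnerProductSpace ℝ E] [CompleteSpace E]
  {f : E → ℝ} {L : ℝ}

theorem continuous_gradient_of_lipschitz
    (hlip : ∀ x y, ‖gradient f x - gradient f y‖ ≤ L * ‖x - y‖) : Continuous (gradient f) :=
  (LipschitzWith.of_dist_le' fun x y => by simpa only [dist_eq_norm] using hlip x y).continuous

theorem le_add_inner_gradient_add_half_mul_sq (hdiff : Differentiable ℝ f)
    (hlip : ∀ x y, ‖gradient f x - gradient f y‖ ≤ L * ‖x - y‖) (x y : E) :
    f y ≤ f x + ⟪gradient f x, y - x⟫ + L / 2 * ‖y - x‖ ^ 2 := by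
  set v := y - x
  -- `ψ` is antitone on `[0, ∞)`: its derivative is `⟪∇f (x + t v) - ∇f x, v⟫ - L t ‖v‖² ≤ 0`.
  let ψ : ℝ → ℝ := fun t => f (x + t • v) - t * ⟪gradient f x, v⟫ - L / 2 * t ^ 2 * ‖v‖ ^ 2
  have hψ : ∀ t, HasDerivAt ψ
      (⟪gradient f (x + t • v), v⟫ - ⟪gradient f x, v⟫ - L * t * ‖v‖ ^ 2) t := by
    intro t
    have hline : HasDerivAt (fun t : ℝ => x + t • v) v t := by
      simpa using ((hasDerivAt_id t).smul_const v).const_add x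
    have hf := ((hdiff (x + t • v)).hasGradientAt.hasFDerivAt).comp_hasDerivAt t hline
    refine ((hf.sub ((hasDerivAt_id t).mul_const ⟪gradient f x, v⟫)).sub
      (((hasDerivAt_pow 2 t).const_mul (L / 2)).mul_const (‖v‖ ^ 2))).congr_deriv ?_
    simp only [toDual_apply_apply, one_mul, Nat.cast_ofNat]
    ring
  have hanti : AntitoneOn ψ (Set.Ici 0) := by
    refine antitoneOn_of_hasDerivWithinAt_nonpos (convex_Ici 0)
      (fun t _ => (hψ t).continuousAt.continuousWithinAt)
      (fun t _ => (hψ t).hasDerivWithinAt) fun t ht => ?_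
    rw [interior_Ici, Set.mem_Ioi] at ht
    have hcs : ⟪gradient f (x + t • v) - gradient f x, v⟫ ≤ L * t * ‖v‖ ^ 2 :=
      calc ⟪gradient f (x + t • v) - gradient f x, v⟫
          ≤ ‖gradient f (x + t • v) - gradient f x‖ * ‖v‖ := real_inner_le_norm _ _
        _ ≤ L * ‖x + t • v - x‖ * ‖v‖ := by gcongr; exact hlip _ _
        _ = L * t * ‖v‖ ^ 2 := by
          rw [add_sub_cancel_left, norm_smul, Real.norm_of_nonneg ht.le]; ring
    rw [inner_sub_left] at hcs
    linarith
  have h := hanti Set.self_mem_Ici (Set.mem_Ici.mpr zero_le_one) zero_le_one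
  simp only [ψ, zero_smul, add_zero, one_smul, zero_mul, sub_zero, one_mul, one_pow,
    ne_eq, OfNat.ofNat_ne_zero, not_false_eq_true, zero_pow, mul_zero] at h
  have hy : x + v = y := add_sub_cancel x y
  rw [hy] at h
  linarith

theorem norm_gradient_sq_le (hL : 0 < L) (hdiff : Differentiable ℝ f)
    (hlip : ∀ x y, ‖gradient f x - gradient f y‖ ≤ L * ‖x - y‖) {finf : ℝ}
    (hbd : ∀ x, finf ≤ f x) (z : E) :
    ‖gradient f z‖ ^ 2 ≤ 2 * L * (f z - finf) := by
  have h := le_add_inner_gradient_add_half_mul_sq hdiff hlip z (z - L⁻¹ • gradient f z)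
  rw [sub_sub_cancel_left, inner_neg_right, real_inner_smul_right, real_inner_self_eq_norm_sq,
    norm_neg, norm_smul, Real.norm_of_nonneg (inv_nonneg.mpr hL.le), mul_pow] at h
  have hquad : L / 2 * ((L⁻¹) ^ 2 * ‖gradient f z‖ ^ 2) = L⁻¹ / 2 * ‖gradient f z‖ ^ 2 := by
    field_simp
  have hbelow := hbd (z - L⁻¹ • gradient f z)
  have hdecrease : L⁻¹ / 2 * ‖gradient f z‖ ^ 2 ≤ f z - finf := by linarith
  calc ‖gradient f z‖ ^ 2 = 2 * L * (L⁻¹ / 2 * ‖gradient f z‖ ^ 2) := by field_simp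
    _ ≤ 2 * L * (f z - finf) := by gcongr

end LipschitzGradient

section ConditionalExpectation

variable {Ω E : Type*} {m m₀ : MeasurableSpace Ω} {μ : Measure Ω}
  [NormedAddCommGroup E] [InnerProductSpace ℝ E]

theorem MeasureTheory.MemLp.integrable_inner {a b : Ω → E} (ha : MemLp a 2 μ) (hb : MemLp b 2 μ) :
    Integrable (fun ω => ⟪a ω, b ω⟫) μ :=
  memLp_one_iff_integrable.1 ((innerSL ℝ).memLp_of_bilin 1 ha hb)

theorem integral_inner_eq_integral_norm_sq_of_condExp_eq [CompleteSpace E] (hm : m ≤ m₀)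
    [SigmaFinite (μ.trim hm)]
    {h g : Ω → E} (hh : StronglyMeasurable[m] h) (hhg : Integrable (fun ω => ⟪h ω, g ω⟫) μ)
    (hg : Integrable g μ) (hcond : μ[g|m] =ᵐ[μ] h) :
    ∫ ω, ⟪h ω, g ω⟫ ∂μ = ∫ ω, ‖h ω‖ ^ 2 ∂μ := by
  have hpull := condExp_bilin_of_stronglyMeasurable_left (innerSL ℝ) hh hhg hg
  calc ∫ ω, ⟪h ω, g ω⟫ ∂μ = ∫ ω, (μ[fun ω => ⟪h ω, g ω⟫|m]) ω ∂μ := (integral_condExp hm).symm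
    _ = ∫ ω, ‖h ω‖ ^ 2 ∂μ := integral_congr_ae <| by
      filter_upwards [hpull, hcond] with ω h1 h2
      exact h1.trans (by rw [innerSL_apply_apply, h2, real_inner_self_eq_norm_sq])

theorem integral_le_of_condExp_le (hm : m ≤ m₀) [SigmaFinite (μ.trim hm)] {φ ψ : Ω → ℝ}
    (hψ : Integrable ψ μ) (hle : μ[φ|m] ≤ᵐ[μ] ψ) : ∫ ω, φ ω ∂μ ≤ ∫ ω, ψ ω ∂μ :=
  (integral_condExp hm).symm.trans_le (integral_mono_ae integrable_condExp hψ hle)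

end ConditionalExpectation

theorem exists_lt_le_of_le_mul_sub_add {r c : ℝ} (hr : 1 ≤ r) {δ e : ℕ → ℝ} (hδ : ∀ k, 0 ≤ δ k)
    (hrec : ∀ k, δ (k + 1) ≤ r * δ k - e k + c) {K : ℕ} (hK : 0 < K) :
    ∃ k < K, e k ≤ c + r ^ K * δ 0 / K := by
  have hr0 : 0 < r := by linarith
  set q := r⁻¹
  have hq0 : 0 ≤ q := inv_nonneg.2 hr0.le
  -- Weighting step `k` by `r⁻¹ ^ (k + 1)` makes the recursion telescope.
  have hstep : ∀ k, q ^ (k + 1) * (e k - c) ≤ q ^ k * δ k - q ^ (k + 1) * δ (k + 1) := by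
    intro k
    have h := mul_le_mul_of_nonneg_left (hrec k) (pow_nonneg hq0 (k + 1))
    have hqr : q ^ (k + 1) * r = q ^ k := by
      rw [pow_succ, mul_assoc, inv_mul_cancel₀ hr0.ne', mul_one]
    linear_combination h + δ k * hqr
  have hsum : ∑ k ∈ range K, q ^ (k + 1) * (e k - c) ≤ δ 0 :=
    calc ∑ k ∈ range K, q ^ (k + 1) * (e k - c)
        ≤ ∑ k ∈ range K, (q ^ k * δ k - q ^ (k + 1) * δ (k + 1)) := sum_le_sum fun k _ => hstep k
      _ = δ 0 - q ^ K * δ K := by rw [sum_range_sub']; simp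
      _ ≤ δ 0 := sub_le_self _ (mul_nonneg (pow_nonneg hq0 K) (hδ K))
  obtain ⟨k₀, hk₀, hmin⟩ := exists_min_image (range K) e (nonempty_range_iff.2 hK.ne')
  refine ⟨k₀, mem_range.1 hk₀, ?_⟩
  rcases le_or_gt (e k₀) c with hle | hlt
  · have : 0 ≤ r ^ K * δ 0 / K := by have := hδ 0; positivity
    linarith
  have hKq : K * (q ^ K * (e k₀ - c)) ≤ δ 0 :=
    calc K * (q ^ K * (e k₀ - c)) = ∑ k ∈ range K, q ^ K * (e k₀ - c) := by simp
      _ ≤ ∑ k ∈ range K, q ^ (k + 1) * (e k - c) := sum_le_sum fun k hk => by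
          have hkK : k + 1 ≤ K := mem_range.1 hk
          exact mul_le_mul (pow_le_pow_of_le_one hq0 (inv_le_one_of_one_le₀ hr) hkK)
            (by linarith [hmin k hk]) (sub_nonneg.2 hlt.le) (pow_nonneg hq0 _)
      _ ≤ δ 0 := hsum
  have hqr : r ^ K * q ^ K = 1 := by rw [← mul_pow, mul_inv_cancel₀ hr0.ne', one_pow]
  rw [← sub_le_iff_le_add', le_div_iff₀ (by exact_mod_cast hK)]
  calc (e k₀ - c) * K = r ^ K * (K * (q ^ K * (e k₀ - c))) := by
        linear_combination (-(e k₀ - c) * K) * hqr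
    _ ≤ r ^ K * δ 0 := by gcongr

section SGDStep

variable {Ω E : Type*} {m m₀ : MeasurableSpace Ω} {μ : Measure Ω}
  [NormedAddCommGroup E] [InnerProductSpace ℝ E] [CompleteSpace E]
  {f : E → ℝ} {L finf : ℝ} {X X' G : Ω → E} {γ : ℝ}

theorem integral_norm_sq_le_of_condExp_le [IsProbabilityMeasure μ] (hm : m ≤ m₀) {A B C : ℝ}
    (hfX : Integrable (fun ω => f (X ω)) μ)
    (hgrad : Integrable (fun ω => ‖gradient f (X ω)‖ ^ 2) μ)
    (hES : ∀ᵐ ω ∂μ, μ[fun ω => ‖G ω‖ ^ 2|m] ω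
      ≤ 2 * A * (f (X ω) - finf) + B * ‖gradient f (X ω)‖ ^ 2 + C) :
    ∫ ω, ‖G ω‖ ^ 2 ∂μ
      ≤ 2 * A * (∫ ω, f (X ω) ∂μ - finf) + B * ∫ ω, ‖gradient f (X ω)‖ ^ 2 ∂μ + C := by
  have hgap : Integrable (fun ω => 2 * A * (f (X ω) - finf)) μ :=
    (hfX.sub (integrable_const finf)).const_mul _
  have hgrad' : Integrable (fun ω => B * ‖gradient f (X ω)‖ ^ 2) μ := hgrad.const_mul B
  have hsum : Integrable (fun ω => 2 * A * (f (X ω) - finf) + B * ‖gradient f (X ω)‖ ^ 2) μ :=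
    hgap.add hgrad'
  calc ∫ ω, ‖G ω‖ ^ 2 ∂μ
      ≤ ∫ ω, (2 * A * (f (X ω) - finf) + B * ‖gradient f (X ω)‖ ^ 2 + C) ∂μ :=
        integral_le_of_condExp_le hm (hsum.add (integrable_const C)) hES
    _ = _ := by
      rw [integral_add hsum (integrable_const C), integral_add hgap hgrad',
        integral_const_mul, integral_const_mul, integral_sub hfX (integrable_const finf)]
      simp

variable [MeasurableSpace E] [BorelSpace E] [SecondCountableTopology E]

theorem memLp_two_gradient_comp [IsFiniteMeasure μ] (hL : 0 < L) (hdiff : Differentiable ℝ f)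
    (hlip : ∀ x y, ‖gradient f x - gradient f y‖ ≤ L * ‖x - y‖) (hbd : ∀ x, finf ≤ f x)
    (hX : Measurable X) (hfX : Integrable (fun ω => f (X ω)) μ) :
    MemLp (fun ω => gradient f (X ω)) 2 μ := by
  have hmeas : AEStronglyMeasurable (fun ω => gradient f (X ω)) μ :=
    ((continuous_gradient_of_lipschitz hlip).measurable.comp hX).aestronglyMeasurable
  rw [memLp_two_iff_integrable_sq_norm hmeas]
  refine (((hfX.sub (integrable_const finf)).const_mul (2 * L))).mono' (hmeas.norm.pow 2) ?_
  filter_upwards with ω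
  rw [Real.norm_of_nonneg (by positivity)]
  exact norm_gradient_sq_le hL hdiff hlip hbd (X ω)

theorem integral_sgd_step_le [IsFiniteMeasure μ] (hL : 0 < L) (hdiff : Differentiable ℝ f)
    (hlip : ∀ x y, ‖gradient f x - gradient f y‖ ≤ L * ‖x - y‖) (hbd : ∀ x, finf ≤ f x)
    (hm : m ≤ m₀) (hX : Measurable[m] X) (hupd : ∀ ω, X' ω = X ω - γ • G ω)
    (hG : MemLp G 2 μ) (hfX : Integrable (fun ω => f (X ω)) μ)
    (hfX' : Integrable (fun ω => f (X' ω)) μ)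
    (hunb : μ[G|m] =ᵐ[μ] fun ω => gradient f (X ω)) :
    ∫ ω, f (X' ω) ∂μ ≤ ∫ ω, f (X ω) ∂μ - γ * ∫ ω, ‖gradient f (X ω)‖ ^ 2 ∂μ
      + L / 2 * γ ^ 2 * ∫ ω, ‖G ω‖ ^ 2 ∂μ := by
  have hgrad := memLp_two_gradient_comp hL hdiff hlip hbd (hX.mono hm le_rfl) hfX
  have hinner : Integrable (fun ω => ⟪gradient f (X ω), G ω⟫) μ := hgrad.integrable_inner hG
  have hG2 : Integrable (fun ω => ‖G ω‖ ^ 2) μ := hG.integrable_norm_pow two_ne_zero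
  have hpoint : ∀ ω, f (X' ω) ≤ f (X ω) - γ * ⟪gradient f (X ω), G ω⟫
      + L / 2 * γ ^ 2 * ‖G ω‖ ^ 2 := fun ω => by
    have h := le_add_inner_gradient_add_half_mul_sq hdiff hlip (X ω) (X ω - γ • G ω)
    rw [hupd]
    rwa [sub_sub_cancel_left, inner_neg_right, real_inner_smul_right, norm_neg, norm_smul,
      mul_pow, Real.norm_eq_abs, sq_abs, ← sub_eq_add_neg, ← mul_assoc] at h
  have hcross : ∫ ω, ⟪gradient f (X ω), G ω⟫ ∂μ = ∫ ω, ‖gradient f (X ω)‖ ^ 2 ∂μ :=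
    integral_inner_eq_integral_norm_sq_of_condExp_eq hm
      ((continuous_gradient_of_lipschitz hlip).comp_stronglyMeasurable hX.stronglyMeasurable)
      hinner (hG.integrable one_le_two) hunb
  have hdescent : Integrable (fun ω => f (X ω) - γ * ⟪gradient f (X ω), G ω⟫) μ :=
    hfX.sub (hinner.const_mul γ)
  have hquad : Integrable (fun ω => L / 2 * γ ^ 2 * ‖G ω‖ ^ 2) μ := hG2.const_mul _
  calc ∫ ω, f (X' ω) ∂μ
      ≤ ∫ ω, (f (X ω) - γ * ⟪gradient f (X ω), G ω⟫ + L / 2 * γ ^ 2 * ‖G ω‖ ^ 2) ∂μ :=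
        integral_mono hfX' (hdescent.add hquad) hpoint
    _ = _ := by
      rw [integral_add hdescent hquad, integral_sub hfX (hinner.const_mul γ), integral_const_mul,
        integral_const_mul, hcross]

theorem sgd_gap_recursion [IsProbabilityMeasure μ] {A B C : ℝ} (hL : 0 < L)
    (hdiff : Differentiable ℝ f)
    (hlip : ∀ x y, ‖gradient f x - gradient f y‖ ≤ L * ‖x - y‖) (hbd : ∀ x, finf ≤ f x)
    (hγ : 0 < γ) (hγBL : γ * (B * L) ≤ 1)
    (hm : m ≤ m₀) (hX : Measurable[m] X) (hupd : ∀ ω, X' ω = X ω - γ • G ω)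
    (hG : MemLp G 2 μ) (hfX : Integrable (fun ω => f (X ω)) μ)
    (hfX' : Integrable (fun ω => f (X' ω)) μ)
    (hunb : μ[G|m] =ᵐ[μ] fun ω => gradient f (X ω))
    (hES : ∀ᵐ ω ∂μ, μ[fun ω => ‖G ω‖ ^ 2|m] ω
      ≤ 2 * A * (f (X ω) - finf) + B * ‖gradient f (X ω)‖ ^ 2 + C) :
    ∫ ω, f (X' ω) ∂μ - finf ≤ (1 + L * γ ^ 2 * A) * (∫ ω, f (X ω) ∂μ - finf)
      - γ / 2 * ∫ ω, ‖gradient f (X ω)‖ ^ 2 ∂μ + L * γ ^ 2 * C / 2 := by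
  have hgrad := memLp_two_gradient_comp hL hdiff hlip hbd (hX.mono hm le_rfl) hfX
  have hdescent := integral_sgd_step_le hL hdiff hlip hbd hm hX hupd hG hfX hfX' hunb
  have hmoment := integral_norm_sq_le_of_condExp_le hm hfX
    (hgrad.integrable_norm_pow two_ne_zero) hES
  have hE : 0 ≤ ∫ ω, ‖gradient f (X ω)‖ ^ 2 ∂μ := integral_nonneg fun ω => by positivity
  -- The stepsize condition `γ B L ≤ 1` lets the descent term absorb the `B`-part of the noise.
  have hcoef : L / 2 * γ ^ 2 * B ≤ γ / 2 := by nlinarith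
  have hnoise := mul_le_mul_of_nonneg_left hmoment (by positivity : 0 ≤ L / 2 * γ ^ 2)
  linarith [mul_le_mul_of_nonneg_right hcoef hE]

end SGDStep

theorem stmt11 {d : ℕ} {Ω : Type*} [MeasureSpace Ω]
    [IsProbabilityMeasure (volume : Measure Ω)]
    (f : EuclideanSpace ℝ (Fin d) → ℝ) (L finf A B C : ℝ)
    (hL : 0 < L) (hA : 0 ≤ A)
    (hdiff : Differentiable ℝ f)
    (hlip : ∀ x y, ‖gradient f x - gradient f y‖ ≤ L * ‖x - y‖)
    (hbd : ∀ x, finf ≤ f x)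
    (γ : ℝ) (hγ0 : 0 < γ) (hγB : γ ≤ 1 / (B * L))
    (x g : ℕ → Ω → EuclideanSpace ℝ (Fin d))
    (x0 : EuclideanSpace ℝ (Fin d)) (hx0 : ∀ ω, x 0 ω = x0)
    (hupd : ∀ k ω, x (k + 1) ω = x k ω - γ • g k ω)
    (hxm : ∀ k, Measurable (x k))
    (hg2 : ∀ k, MemLp (g k) 2 volume)
    (hfint : ∀ k, Integrable (fun ω => f (x k ω)) volume)
    (hunb : ∀ k,
      (volume[g k | MeasurableSpace.comap (x k) (by infer_instance)])
        =ᵐ[volume] fun ω => gradient f (x k ω))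
    (hES : ∀ k, ∀ᵐ ω ∂volume,
      (volume[(fun ω' => ‖g k ω'‖ ^ 2) | MeasurableSpace.comap (x k) (by infer_instance)]) ω
        ≤ 2 * A * (f (x k ω) - finf) + B * ‖gradient f (x k ω)‖ ^ 2 + C)
    (K : ℕ) (hK : 0 < K) :
    ∃ k < K, (∫ ω, ‖gradient f (x k ω)‖ ^ 2)
      ≤ L * C * γ + 2 * (1 + L * γ ^ 2 * A) ^ K * (f x0 - finf) / (γ * K) := by
  have hBL : 0 < B * L := one_div_pos.1 (hγ0.trans_le hγB)
  have hγBL : γ * (B * L) ≤ 1 := (le_div_iff₀ hBL).1 hγB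
  have hrec : ∀ k, (∫ ω, f (x (k + 1) ω)) - finf
      ≤ (1 + L * γ ^ 2 * A) * ((∫ ω, f (x k ω)) - finf)
      - γ / 2 * (∫ ω, ‖gradient f (x k ω)‖ ^ 2) + L * γ ^ 2 * C / 2 := fun k =>
    sgd_gap_recursion hL hdiff hlip hbd hγ0 hγBL (hxm k).comap_le (comap_measurable (x k))
      (hupd k) (hg2 k) (hfint k) (hfint (k + 1)) (hunb k) (hES k)
  have hgap : ∀ k, 0 ≤ (∫ ω, f (x k ω)) - finf := fun k => sub_nonneg.2 <| by
    simpa using integral_mono (integrable_const finf) (hfint k) fun ω => hbd (x k ω)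
  have hr : 1 ≤ 1 + L * γ ^ 2 * A := le_add_of_nonneg_right (by positivity)
  obtain ⟨k, hk, hbound⟩ := exists_lt_le_of_le_mul_sub_add hr hgap hrec hK
  refine ⟨k, hk, ?_⟩
  simp only [hx0, integral_const, probReal_univ, one_smul] at hbound
  calc ∫ ω, ‖gradient f (x k ω)‖ ^ 2
      = 2 / γ * (γ / 2 * ∫ ω, ‖gradient f (x k ω)‖ ^ 2) := by field_simp
    _ ≤ 2 / γ * (L * γ ^ 2 * C / 2 + (1 + L * γ ^ 2 * A) ^ K * (f x0 - finf) / K) := by gcongr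
    _ = _ := by field_simp
end

section
/- Suppose f is L-smooth and bounded below, g is unbiased with E‖g(x)‖² ≤ 2A(f(x) − f_inf) + B‖∇f(x)‖² + C, and 0 < γ ≤ 1/(BL). Then one SGD step satisfies E[f(x_{k+1}) | x_k] − f_inf ≤ (1 + Lγ²A)(f(x_k) − f_inf) − γ(1 − LBγ/2)‖∇f(x_k)‖² + Lγ²C/2. -/
/-!
Along the segment from `x` to `x + v`, the remainder `f (x + t • v) - f x - t ⟪∇f x, v⟫` has
derivative bounded by `L t ‖v‖²`, so it is at most `L ‖v‖² / 2` in absolute value. With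
`v = -γ g(ω)` the two-sided bound sandwiches `f (x - γ g(ω))` between integrable functions, and
integrating the upper one with `E g = ∇f x` gives
`E f (x - γ g) ≤ f x - γ ‖∇f x‖² + L γ² / 2 · E ‖g‖²`; the second-moment bound finishes.
-/

open MeasureTheory Set

open scoped RealInnerProductSpace

section Smooth

variable {E : Type*} [NormedAddCommGroup E] [InnerProductSpace ℝ E] [CompleteSpace E]
  {f : E → ℝ} {L : ℝ}

theorem abs_sub_sub_inner_gradient_le (hdiff : Differentiable ℝ f)
    (hlip : ∀ x y, ‖gradient f x - gradient f y‖ ≤ L * ‖x - y‖) (x v : E) :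
    |f (x + v) - f x - ⟪gradient f x, v⟫| ≤ L / 2 * ‖v‖ ^ 2 := by
  set φ : ℝ → ℝ := fun t => f (x + t • v) - f x - t * ⟪gradient f x, v⟫
  have hφ : ∀ t, HasDerivAt φ ⟪gradient f (x + t • v) - gradient f x, v⟫ t := by
    intro t
    have hline : HasDerivAt (fun t : ℝ => x + t • v) v t := by
      simpa using ((hasDerivAt_id t).smul_const v).const_add x
    have hf := ((hdiff _).hasGradientAt.hasFDerivAt).comp_hasDerivAt t hline
    refine ((hf.sub_const (f x)).sub
      ((hasDerivAt_id t).mul_const ⟪gradient f x, v⟫)).congr_deriv ?_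
    simp [inner_sub_left]
  have hbound := image_norm_le_of_norm_deriv_right_le_deriv_boundary (a := 0) (b := 1)
    (f := φ) (B := fun t => L / 2 * ‖v‖ ^ 2 * t ^ 2) (B' := fun t => L * ‖v‖ ^ 2 * t)
    (fun t _ => (hφ t).continuousAt.continuousWithinAt) (fun t _ => (hφ t).hasDerivWithinAt)
    (by simp [φ]) (fun t => ((hasDerivAt_pow 2 t).const_mul _).congr_deriv (by ring))
    (fun t ht => ?_) (right_mem_Icc.2 zero_le_one)
  · simpa [φ] using hbound
  · calc ‖⟪gradient f (x + t • v) - gradient f x, v⟫‖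
        ≤ ‖gradient f (x + t • v) - gradient f x‖ * ‖v‖ := norm_inner_le_norm _ _
      _ ≤ L * ‖t • v‖ * ‖v‖ := by
        gcongr
        simpa using hlip (x + t • v) x
      _ = L * ‖v‖ ^ 2 * t := by
        rw [norm_smul, Real.norm_of_nonneg ht.1]; ring

theorem abs_sub_smul_sub_inner_gradient_le (hdiff : Differentiable ℝ f)
    (hlip : ∀ x y, ‖gradient f x - gradient f y‖ ≤ L * ‖x - y‖) (x w : E) (γ : ℝ) :
    |f (x - γ • w) - (f x - γ * ⟪gradient f x, w⟫)| ≤ L * γ ^ 2 / 2 * ‖w‖ ^ 2 := by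
  have h := abs_sub_sub_inner_gradient_le hdiff hlip x (-(γ • w))
  rw [← sub_eq_add_neg, inner_neg_right, real_inner_smul_right, norm_neg, norm_smul,
    mul_pow, Real.norm_eq_abs, sq_abs] at h
  calc _ = |f (x - γ • w) - f x - -(γ * ⟪gradient f x, w⟫)| := by ring_nf
    _ ≤ _ := h
    _ = _ := by ring

variable {Ω : Type*} [MeasurableSpace Ω] {μ : Measure Ω} [IsProbabilityMeasure μ]

theorem integrable_comp_sub_smul (hdiff : Differentiable ℝ f)
    (hlip : ∀ x y, ‖gradient f x - gradient f y‖ ≤ L * ‖x - y‖) (x : E) {g : Ω → E}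
    (hg : MemLp g 2 μ) (γ : ℝ) :
    Integrable (fun ω => f (x - γ • g ω)) μ := by
  have hlin : Integrable (fun ω => f x - γ * ⟪gradient f x, g ω⟫) μ :=
    (integrable_const _).sub (((hg.integrable one_le_two).const_inner _).const_mul γ)
  have herr : Integrable (fun ω => f (x - γ • g ω) - (f x - γ * ⟪gradient f x, g ω⟫)) μ := by
    refine Integrable.mono' (hg.norm.integrable_sq.const_mul (L * γ ^ 2 / 2)) ?_
      (Filter.Eventually.of_forall fun ω => abs_sub_smul_sub_inner_gradient_le hdiff hlip x (g ω) γ)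
    exact (hdiff.continuous.comp_aestronglyMeasurable
      (aestronglyMeasurable_const.sub (hg.aestronglyMeasurable.const_smul γ))).sub
        hlin.aestronglyMeasurable
  exact (herr.add hlin).congr (ae_of_all _ fun ω => sub_add_cancel _ _)

theorem integral_comp_sub_smul_le (hdiff : Differentiable ℝ f)
    (hlip : ∀ x y, ‖gradient f x - gradient f y‖ ≤ L * ‖x - y‖) (x : E) {g : Ω → E}
    (hg : MemLp g 2 μ) (hunb : ∫ ω, g ω ∂μ = gradient f x) (γ : ℝ) :
    ∫ ω, f (x - γ • g ω) ∂μ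
      ≤ f x - γ * ‖gradient f x‖ ^ 2 + L * γ ^ 2 / 2 * ∫ ω, ‖g ω‖ ^ 2 ∂μ := by
  have hgi : Integrable g μ := hg.integrable one_le_two
  have hinner : Integrable (fun ω => γ * ⟪gradient f x, g ω⟫) μ :=
    (hgi.const_inner _).const_mul γ
  have hlin : Integrable (fun ω => f x - γ * ⟪gradient f x, g ω⟫) μ :=
    (integrable_const _).sub hinner
  have hsq : Integrable (fun ω => L * γ ^ 2 / 2 * ‖g ω‖ ^ 2) μ :=
    hg.norm.integrable_sq.const_mul _
  calc ∫ ω, f (x - γ • g ω) ∂μ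
      ≤ ∫ ω, (f x - γ * ⟪gradient f x, g ω⟫ + L * γ ^ 2 / 2 * ‖g ω‖ ^ 2) ∂μ :=
        integral_mono (integrable_comp_sub_smul hdiff hlip x hg γ) (hlin.add hsq) fun ω => by
          linarith [(abs_le.1 (abs_sub_smul_sub_inner_gradient_le hdiff hlip x (g ω) γ)).2]
    _ = f x - γ * ‖gradient f x‖ ^ 2 + L * γ ^ 2 / 2 * ∫ ω, ‖g ω‖ ^ 2 ∂μ := by
        rw [integral_add hlin hsq, integral_sub (integrable_const _) hinner,
          integral_const_mul, integral_const_mul, integral_inner hgi, hunb,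
          real_inner_self_eq_norm_sq]
        simp

end Smooth

theorem stmt12_general {d : ℕ} {Ω : Type*} [MeasureSpace Ω]
    [IsProbabilityMeasure (volume : Measure Ω)]
    (f : EuclideanSpace ℝ (Fin d) → ℝ) (L finf A B C : ℝ)
    (hL : 0 < L)
    (hdiff : Differentiable ℝ f)
    (hlip : ∀ x y, ‖gradient f x - gradient f y‖ ≤ L * ‖x - y‖)
    (γ : ℝ)
    (xk : EuclideanSpace ℝ (Fin d)) (g : Ω → EuclideanSpace ℝ (Fin d))
    (hg2 : MemLp g 2 volume)
    (hunb : (∫ ω, g ω) = gradient f xk)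
    (hES : (∫ ω, ‖g ω‖ ^ 2) ≤ 2 * A * (f xk - finf) + B * ‖gradient f xk‖ ^ 2 + C) :
    (∫ ω, f (xk - γ • g ω)) - finf
      ≤ (1 + L * γ ^ 2 * A) * (f xk - finf)
        - γ * (1 - L * B * γ / 2) * ‖gradient f xk‖ ^ 2 + L * γ ^ 2 * C / 2 := by
  have hstep := integral_comp_sub_smul_le hdiff hlip xk hg2 hunb γ
  have hvar := mul_le_mul_of_nonneg_left hES (by positivity : 0 ≤ L * γ ^ 2 / 2)
  linarith

theorem stmt12 {d : ℕ} {Ω : Type*} [MeasureSpace Ω]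
    [IsProbabilityMeasure (volume : Measure Ω)]
    (f : EuclideanSpace ℝ (Fin d) → ℝ) (L finf A B C : ℝ)
    (hL : 0 < L) (hA : 0 ≤ A) (hB : 0 ≤ B) (hC : 0 ≤ C)
    (hdiff : Differentiable ℝ f)
    (hlip : ∀ x y, ‖gradient f x - gradient f y‖ ≤ L * ‖x - y‖)
    (hbd : ∀ x, finf ≤ f x)
    (γ : ℝ) (hγ0 : 0 < γ) (hγB : γ ≤ 1 / (B * L))
    (xk : EuclideanSpace ℝ (Fin d)) (g : Ω → EuclideanSpace ℝ (Fin d))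
    (hg2 : MemLp g 2 volume)
    (hunb : (∫ ω, g ω) = gradient f xk)
    (hES : (∫ ω, ‖g ω‖ ^ 2) ≤ 2 * A * (f xk - finf) + B * ‖gradient f xk‖ ^ 2 + C) :
    (∫ ω, f (xk - γ • g ω)) - finf
      ≤ (1 + L * γ ^ 2 * A) * (f xk - finf)
        - γ * (1 - L * B * γ / 2) * ‖gradient f xk‖ ^ 2 + L * γ ^ 2 * C / 2 :=
  stmt12_general f L finf A B C hL hdiff hlip γ xk g hg2 hunb hES
end

section
/- Let (r_t)_{t≥0} be a nonnegative sequence satisfying r_{t+1} ≤ (1 − aγ_t)r_t + cγ_t², where 0 < a ≤ b, c ≥ 0, and all stepsizes satisfy γ_t ≤ 1/b. If K ≤ b/a and γ_t = 1/b for all t, then r_K ≤ exp(−aK/b)·r₀ + c/(a²K). -/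
/-!
Unrolling the recursion with contraction factor `q = 1 - a/b ∈ [0, 1)` gives
`r K ≤ q ^ K r₀ + (c / b²) ∑_{i<K} q ^ i`. The first term is at most `exp (-aK/b) r₀` since
`1 - x ≤ exp (-x)`, and the geometric sum is at most `K`, so the noise term is at most
`c K / b² ≤ c / (a² K)`, the last step being `(a K)² ≤ b²`.
-/

open Finset

theorem le_pow_mul_add_mul_geom_sum_of_le_mul_add {r : ℕ → ℝ} {q d : ℝ} (hq : 0 ≤ q)
    (hrec : ∀ t, r (t + 1) ≤ q * r t + d) (n : ℕ) :
    r n ≤ q ^ n * r 0 + d * ∑ i ∈ range n, q ^ i := by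
  induction n with
  | zero => simp
  | succ n ih =>
    calc r (n + 1) ≤ q * r n + d := hrec n
      _ ≤ q * (q ^ n * r 0 + d * ∑ i ∈ range n, q ^ i) + d := by gcongr
      _ = q ^ (n + 1) * r 0 + d * ∑ i ∈ range (n + 1), q ^ i := by
        rw [geom_sum_succ]; ring

theorem geom_sum_le_of_le_one {q : ℝ} (hq₀ : 0 ≤ q) (hq₁ : q ≤ 1) (n : ℕ) :
    ∑ i ∈ range n, q ^ i ≤ n := by
  simpa using sum_le_card_nsmul (range n) (q ^ ·) 1 fun i _ ↦ pow_le_one₀ hq₀ hq₁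

theorem one_sub_pow_le_exp_neg_mul {x : ℝ} (hx : x ≤ 1) (n : ℕ) :
    (1 - x) ^ n ≤ Real.exp (-(n * x)) := by
  calc (1 - x) ^ n ≤ Real.exp (-x) ^ n :=
        pow_le_pow_left₀ (by linarith) (Real.one_sub_le_exp_neg x) n
    _ = Real.exp (-(n * x)) := by rw [← Real.exp_nat_mul]; ring_nf

theorem mul_div_sq_le_div_sq_mul {a b c K : ℝ} (ha : 0 < a) (hc : 0 ≤ c) (hK : 0 ≤ K)
    (hKb : a * K ≤ b) : c * K / b ^ 2 ≤ c / (a ^ 2 * K) := by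
  rcases hK.eq_or_lt with rfl | hK
  · simp
  have hb : 0 < b := (by positivity : 0 < a * K).trans_le hKb
  rw [div_le_div_iff₀ (by positivity) (by positivity)]
  have : (a * K) ^ 2 ≤ b ^ 2 := pow_le_pow_left₀ (by positivity) hKb 2
  nlinarith

theorem stmt13_general (a b c : ℝ) (ha : 0 < a) (hab : a ≤ b) (hc : 0 ≤ c)
    (r : ℕ → ℝ) (hr : ∀ t, 0 ≤ r t)
    (hrec : ∀ t, r (t + 1) ≤ (1 - a * (1 / b)) * r t + c * (1 / b) ^ 2)
    (K : ℕ) (hKb : (K : ℝ) ≤ b / a) :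
    r K ≤ Real.exp (-(a * K) / b) * r 0 + c / (a ^ 2 * K) := by
  have hb : 0 < b := ha.trans_le hab
  have hx₀ : 0 ≤ a * (1 / b) := by positivity
  have hx₁ : a * (1 / b) ≤ 1 := by rw [mul_one_div, div_le_one hb]; exact hab
  have hq₀ : 0 ≤ 1 - a * (1 / b) := by linarith
  have hdecay : (1 - a * (1 / b)) ^ K ≤ Real.exp (-(a * K) / b) := by
    convert one_sub_pow_le_exp_neg_mul hx₁ K using 2; ring
  have hnoise : c * (1 / b) ^ 2 * ∑ i ∈ range K, (1 - a * (1 / b)) ^ i ≤ c / (a ^ 2 * K) :=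
    calc _ ≤ c * (1 / b) ^ 2 * K := by gcongr; exact geom_sum_le_of_le_one hq₀ (by linarith) K
      _ = c * K / b ^ 2 := by ring
      _ ≤ c / (a ^ 2 * K) :=
        mul_div_sq_le_div_sq_mul ha hc K.cast_nonneg (by rwa [le_div_iff₀ ha, mul_comm] at hKb)
  calc r K ≤ (1 - a * (1 / b)) ^ K * r 0
        + c * (1 / b) ^ 2 * ∑ i ∈ range K, (1 - a * (1 / b)) ^ i :=
        le_pow_mul_add_mul_geom_sum_of_le_mul_add hq₀ hrec K
    _ ≤ Real.exp (-(a * K) / b) * r 0 + c / (a ^ 2 * K) :=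
        add_le_add (mul_le_mul_of_nonneg_right hdecay (hr 0)) hnoise

theorem stmt13 (a b c : ℝ) (ha : 0 < a) (hab : a ≤ b) (hc : 0 ≤ c)
    (r : ℕ → ℝ) (hr : ∀ t, 0 ≤ r t)
    (hrec : ∀ t, r (t + 1) ≤ (1 - a * (1 / b)) * r t + c * (1 / b) ^ 2)
    (K : ℕ) (hK : 0 < K) (hKb : (K : ℝ) ≤ b / a) :
    r K ≤ Real.exp (-(a * K) / b) * r 0 + c / (a ^ 2 * K) :=
  stmt13_general a b c ha hab hc r hr hrec K hKb
end

section
/- Let f be L-smooth and convex with nonempty set of minimizers X★ and minimum f★, and suppose the quadratic functional growth condition f(x) − f★ ≥ (μ/2)‖x − π(x)‖² holds, where π(x) is the projection of x onto X★. Then for the gradient descent step T_γ(x) = x − γ∇f(x) with 0 < γ ≤ 1/L, ‖T_γ(x) − π(x)‖² ≤ ‖x − π(x)‖² − (1 − Lγ)γ²‖∇f(x)‖² − 2γ(f(T_γ(x)) − f★). -/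
/-!
Write `T x = x - γ • ∇f x`. Expanding the square gives
`‖T x - π x‖² = ‖x - π x‖² + 2γ⟪∇f x, π x - x⟫ + γ²‖∇f x‖²`.
Convexity at the minimizer `π x` bounds `⟪∇f x, π x - x⟫` by `f★ - f x`, and the descent lemma
for an `L`-Lipschitz gradient bounds `f (T x)` by `f x - γ‖∇f x‖² + (L/2)γ²‖∇f x‖²`;
multiplying both by `2γ` and adding gives the claim.
-/

open Set RealInnerProductSpace

lemma le_add_deriv_add_of_deriv_sub_le {φ φ' : ℝ → ℝ} {C : ℝ}
    (hφ : ∀ t ∈ Icc (0 : ℝ) 1, HasDerivAt φ (φ' t) t)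
    (hC : ∀ t ∈ Icc (0 : ℝ) 1, φ' t - φ' 0 ≤ C * t) :
    φ 1 ≤ φ 0 + φ' 0 + C / 2 := by
  set ψ : ℝ → ℝ := fun t ↦ φ t - t * φ' 0 - C / 2 * t ^ 2
  have hψ : ∀ t ∈ Icc (0 : ℝ) 1, HasDerivAt ψ (φ' t - φ' 0 - C * t) t := fun t ht ↦ by
    refine (((hφ t ht).sub ((hasDerivAt_id t).mul_const (φ' 0))).sub
      ((hasDerivAt_pow 2 t).const_mul (C / 2))).congr_deriv ?_
    simp only [Nat.cast_ofNat]
    ring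
  have hanti : AntitoneOn ψ (Icc 0 1) := by
    refine antitoneOn_of_hasDerivWithinAt_nonpos (convex_Icc 0 1)
      (fun t ht ↦ (hψ t ht).continuousAt.continuousWithinAt)
      (fun t ht ↦ (hψ t (interior_subset ht)).hasDerivWithinAt) fun t ht ↦ ?_
    linarith [hC t (interior_subset ht)]
  have := hanti (left_mem_Icc.2 zero_le_one) (right_mem_Icc.2 zero_le_one) zero_le_one
  simp only [ψ] at this
  linarith

variable {E : Type*} [NormedAddCommGroup E] [InnerProductSpace ℝ E] [CompleteSpace E]
  {f : E → ℝ}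

lemma HasGradientAt.hasDerivAt_comp_add_smul {f' x v : E} {t : ℝ}
    (hf : HasGradientAt f f' (x + t • v)) :
    HasDerivAt (fun s : ℝ ↦ f (x + s • v)) ⟪f', v⟫ t := by
  have hline : HasDerivAt (fun s : ℝ ↦ x + s • v) v t := by
    simpa using ((hasDerivAt_id t).smul_const v).const_add x
  have := hf.hasFDerivAt.comp_hasDerivAt t hline
  rw [InnerProductSpace.toDual_apply_apply] at this
  exact this

lemma ConvexOn.inner_gradient_sub_le (hconv : ConvexOn ℝ univ f) {x : E}
    (hx : DifferentiableAt ℝ f x) (y : E) :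
    ⟪gradient f x, y - x⟫ ≤ f y - f x := by
  have hline : ConvexOn ℝ univ (fun s : ℝ ↦ f (x + s • (y - x))) := by
    have hcomp : (fun s : ℝ ↦ f (x + s • (y - x))) = f ∘ AffineMap.lineMap x y := by
      ext s
      simp [AffineMap.lineMap_apply, add_comm]
    rw [hcomp]
    exact (hconv.comp_affineMap _).subset (subset_univ _) convex_univ
  have h0 : HasDerivAt (fun s : ℝ ↦ f (x + s • (y - x))) ⟪gradient f x, y - x⟫ 0 :=
    HasGradientAt.hasDerivAt_comp_add_smul (by simpa using hx.hasGradientAt)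
  simpa [slope_def_field] using
    hline.le_slope_of_hasDerivAt (mem_univ 0) (mem_univ 1) zero_lt_one h0

lemma le_add_inner_gradient_add_of_gradient_lipschitz {L : ℝ} (hdiff : Differentiable ℝ f)
    (hlip : ∀ x y, ‖gradient f x - gradient f y‖ ≤ L * ‖x - y‖) (x y : E) :
    f y ≤ f x + ⟪gradient f x, y - x⟫ + L / 2 * ‖y - x‖ ^ 2 := by
  have hderiv : ∀ t : ℝ, HasDerivAt (fun s : ℝ ↦ f (x + s • (y - x)))
      ⟪gradient f (x + t • (y - x)), y - x⟫ t := fun t ↦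
    (hdiff _).hasGradientAt.hasDerivAt_comp_add_smul
  have hbound : ∀ t ∈ Icc (0 : ℝ) 1, ⟪gradient f (x + t • (y - x)), y - x⟫
      - ⟪gradient f (x + (0 : ℝ) • (y - x)), y - x⟫ ≤ L * ‖y - x‖ ^ 2 * t := by
    intro t ht
    calc _ = ⟪gradient f (x + t • (y - x)) - gradient f x, y - x⟫ := by
          rw [zero_smul, add_zero, inner_sub_left]
      _ ≤ ‖gradient f (x + t • (y - x)) - gradient f x‖ * ‖y - x‖ := real_inner_le_norm _ _
      _ ≤ L * ‖t • (y - x)‖ * ‖y - x‖ := by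
          gcongr
          simpa using hlip (x + t • (y - x)) x
      _ = L * ‖y - x‖ ^ 2 * t := by
          rw [norm_smul, Real.norm_of_nonneg ht.1]; ring
  have := le_add_deriv_add_of_deriv_sub_le (fun t _ ↦ hderiv t) hbound
  simp only [zero_smul, add_zero, one_smul, add_sub_cancel] at this
  linarith

lemma apply_sub_smul_gradient_le {L γ : ℝ} (hdiff : Differentiable ℝ f)
    (hlip : ∀ x y, ‖gradient f x - gradient f y‖ ≤ L * ‖x - y‖) (x : E) :
    f (x - γ • gradient f x)
      ≤ f x - γ * ‖gradient f x‖ ^ 2 + L / 2 * γ ^ 2 * ‖gradient f x‖ ^ 2 := by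
  have := le_add_inner_gradient_add_of_gradient_lipschitz hdiff hlip x (x - γ • gradient f x)
  rw [sub_sub_cancel_left, inner_neg_right, real_inner_smul_right, real_inner_self_eq_norm_sq,
    norm_neg, norm_smul, Real.norm_eq_abs, mul_pow, sq_abs] at this
  linarith

theorem stmt16_general {d : ℕ} (f : EuclideanSpace ℝ (Fin d) → ℝ) (L fstar γ : ℝ)
    (hconv : ConvexOn ℝ Set.univ f)
    (hdiff : Differentiable ℝ f)
    (hlip : ∀ x y, ‖gradient f x - gradient f y‖ ≤ L * ‖x - y‖)
    (π : EuclideanSpace ℝ (Fin d) → EuclideanSpace ℝ (Fin d))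
    (hπmem : ∀ x, f (π x) = fstar)
    (hγ0 : 0 < γ) (x : EuclideanSpace ℝ (Fin d)) :
    ‖(x - γ • gradient f x) - π x‖ ^ 2
      ≤ ‖x - π x‖ ^ 2 - (1 - L * γ) * γ ^ 2 * ‖gradient f x‖ ^ 2
        - 2 * γ * (f (x - γ • gradient f x) - fstar) := by
  set g := gradient f x
  have hsupport : ⟪g, π x - x⟫ ≤ fstar - f x :=
    hπmem x ▸ hconv.inner_gradient_sub_le (hdiff x) (π x)
  have hdescent := apply_sub_smul_gradient_le (γ := γ) hdiff hlip x
  have hexpand :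
      ‖x - γ • g - π x‖ ^ 2 = ‖x - π x‖ ^ 2 + 2 * γ * ⟪g, π x - x⟫ + γ ^ 2 * ‖g‖ ^ 2 := by
    rw [show x - γ • g - π x = -((π x - x) + γ • g) by abel, norm_neg, norm_add_sq_real,
      norm_sub_rev, real_inner_smul_right, real_inner_comm, norm_smul, Real.norm_eq_abs, mul_pow,
      sq_abs]
    ring
  rw [hexpand]
  linarith [mul_le_mul_of_nonneg_left hsupport hγ0.le, mul_le_mul_of_nonneg_left hdescent hγ0.le]

theorem stmt16 {d : ℕ} (f : EuclideanSpace ℝ (Fin d) → ℝ) (L μ fstar γ : ℝ)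
    (hL : 0 < L) (hμ : 0 < μ)
    (hconv : ConvexOn ℝ Set.univ f)
    (hdiff : Differentiable ℝ f)
    (hlip : ∀ x y, ‖gradient f x - gradient f y‖ ≤ L * ‖x - y‖)
    (hmin : ∀ x, fstar ≤ f x) (hne : ∃ y, f y = fstar)
    (π : EuclideanSpace ℝ (Fin d) → EuclideanSpace ℝ (Fin d))
    (hπmem : ∀ x, f (π x) = fstar)
    (hπproj : ∀ x y, f y = fstar → ‖x - π x‖ ≤ ‖x - y‖)
    (hQFG : ∀ x, μ / 2 * ‖x - π x‖ ^ 2 ≤ f x - fstar)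
    (hγ0 : 0 < γ) (hγL : γ ≤ 1 / L) (x : EuclideanSpace ℝ (Fin d)) :
    ‖(x - γ • gradient f x) - π x‖ ^ 2
      ≤ ‖x - π x‖ ^ 2 - (1 - L * γ) * γ ^ 2 * ‖gradient f x‖ ^ 2
        - 2 * γ * (f (x - γ • gradient f x) - fstar) :=
  stmt16_general f L fstar γ hconv hdiff hlip π hπmem hγ0 x
end

section
/- Let f = (1/n)∑ᵢfᵢ be differentiable and let v ∈ ℝⁿ be the sampling-with-replacement vector: vᵢ = Sᵢ/(τqᵢ) where (S₁,…,Sₙ) is multinomial with τ trials and probabilities (q₁,…,qₙ), qᵢ > 0, ∑qᵢ = 1. Then E‖(1/n)∑ᵢvᵢ∇fᵢ(x)‖² = (1 − 1/τ)‖∇f(x)‖² + (1/n²)∑ᵢ‖∇fᵢ(x)‖²/(τqᵢ). -/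
/-!
Encode the τ rolls as `ρ : Fin τ → Fin n`, drawn with weight `∏ k, q (ρ k)`; then
`Sᵢ = #{k | ρ k = i}` and the sampled vector is `(nτ)⁻¹ ∑ₖ Xₖ` with `Xₖ = q(ρ k)⁻¹ ∇f_{ρ k}(x)`,
a sum of τ i.i.d. copies of an unbiased estimate of `∑ᵢ ∇fᵢ(x)`. Expanding the square, each of
the τ diagonal terms has mean `∑ᵢ ‖∇fᵢ(x)‖² / qᵢ`, and by independence each of the τ(τ - 1)
off-diagonal terms has mean `‖∑ᵢ ∇fᵢ(x)‖²`.
-/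

open scoped RealInnerProductSpace
open Finset

section ProductWeights

variable {ι α : Type*} [Fintype ι] [DecidableEq ι] [Fintype α]

section Semiring

variable {R : Type*} [CommSemiring R] {q : α → R}

theorem sum_prod_mul_prod_apply (hq : ∑ a, q a = 1) (s : Finset ι) (φ : ι → α → R) :
    ∑ ρ : ι → α, (∏ m, q (ρ m)) * ∏ m ∈ s, φ m (ρ m) = ∏ m ∈ s, ∑ a, q a * φ m a := by
  have hmarg : ∀ m, ∑ a, q a * (if m ∈ s then φ m a else 1) =
      if m ∈ s then ∑ a, q a * φ m a else 1 := by
    intro m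
    split_ifs <;> simp [hq]
  simp_rw [← prod_ite_mem_eq s, ← hmarg, ← prod_mul_distrib]
  exact (Fintype.prod_sum fun m a => q a * if m ∈ s then φ m a else 1).symm

theorem sum_prod_mul_apply (hq : ∑ a, q a = 1) (k : ι) (φ : α → R) :
    ∑ ρ : ι → α, (∏ m, q (ρ m)) * φ (ρ k) = ∑ a, q a * φ a := by
  simpa using sum_prod_mul_prod_apply hq {k} fun _ => φ

theorem sum_prod_mul_apply_mul_apply (hq : ∑ a, q a = 1) {k l : ι} (hkl : k ≠ l)
    (ψ χ : α → R) :
    ∑ ρ : ι → α, (∏ m, q (ρ m)) * (ψ (ρ k) * χ (ρ l)) =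
      (∑ a, q a * ψ a) * ∑ b, q b * χ b := by
  simpa [prod_pair hkl, hkl.symm] using
    sum_prod_mul_prod_apply hq {k, l} fun m => if m = k then ψ else χ

theorem sum_prod_mul_apply_apply (hq : ∑ a, q a = 1) {k l : ι} (hkl : k ≠ l)
    (φ : α → α → R) :
    ∑ ρ : ι → α, (∏ m, q (ρ m)) * φ (ρ k) (ρ l) = ∑ a, q a * ∑ b, q b * φ a b := by
  classical
  have hdelta : ∀ ρ : ι → α, φ (ρ k) (ρ l) = ∑ a, (if ρ k = a then 1 else 0) * φ a (ρ l) := by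
    intro ρ
    simp
  simp_rw [hdelta, mul_sum]
  rw [sum_comm]
  refine sum_congr rfl fun a _ => ?_
  refine (sum_prod_mul_apply_mul_apply hq hkl (fun c => if c = a then 1 else 0) (φ a)).trans ?_
  simp [mul_sum]

end Semiring

variable {E : Type*} [NormedAddCommGroup E] [InnerProductSpace ℝ E] {q : α → ℝ}

theorem sum_prod_mul_norm_sum_sq (hq : ∑ a, q a = 1) (u : α → E) :
    ∑ ρ : ι → α, (∏ m, q (ρ m)) * ‖∑ k, u (ρ k)‖ ^ 2 =
      Fintype.card ι * ∑ a, q a * ‖u a‖ ^ 2 +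
        Fintype.card ι * (Fintype.card ι - 1) * ‖∑ a, q a • u a‖ ^ 2 := by
  have hdiag : ∀ k : ι, ∑ ρ : ι → α, (∏ m, q (ρ m)) * ⟪u (ρ k), u (ρ k)⟫ =
      ∑ a, q a * ‖u a‖ ^ 2 := by
    intro k
    simp_rw [real_inner_self_eq_norm_sq]
    exact sum_prod_mul_apply hq k fun a => ‖u a‖ ^ 2
  have hoff : ∀ k l : ι, k ≠ l → ∑ ρ : ι → α, (∏ m, q (ρ m)) * ⟪u (ρ k), u (ρ l)⟫ =
      ‖∑ a, q a • u a‖ ^ 2 := by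
    intro k l hkl
    rw [sum_prod_mul_apply_apply hq hkl fun a b => ⟪u a, u b⟫, ← real_inner_self_eq_norm_sq,
      sum_inner]
    simp_rw [inner_sum, real_inner_smul_left, real_inner_smul_right, mul_sum]
  have hrow : ∀ k : ι, ∑ l, ∑ ρ : ι → α, (∏ m, q (ρ m)) * ⟪u (ρ k), u (ρ l)⟫ =
      ∑ a, q a * ‖u a‖ ^ 2 + (Fintype.card ι - 1) * ‖∑ a, q a • u a‖ ^ 2 := by
    intro k
    rw [← add_sum_erase _ _ (mem_univ k), hdiag,
      sum_congr rfl fun l hl => hoff k l (ne_of_mem_erase hl).symm, sum_const,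
      card_erase_of_mem (mem_univ k), card_univ, nsmul_eq_mul,
      Nat.cast_pred (Fintype.card_pos_iff.mpr ⟨k⟩)]
  calc ∑ ρ : ι → α, (∏ m, q (ρ m)) * ‖∑ k, u (ρ k)‖ ^ 2
      = ∑ k, ∑ l, ∑ ρ : ι → α, (∏ m, q (ρ m)) * ⟪u (ρ k), u (ρ l)⟫ := by
        simp_rw [← real_inner_self_eq_norm_sq, sum_inner, inner_sum, mul_sum]
        rw [sum_comm]
        exact sum_congr rfl fun k _ => sum_comm
    _ = _ := by
        rw [sum_congr rfl fun k _ => hrow k, sum_const, card_univ, nsmul_eq_mul]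
        ring

theorem sum_prod_mul_norm_sum_inv_smul_sq (hq : ∑ a, q a = 1) (hq0 : ∀ a, q a ≠ 0)
    (g : α → E) :
    ∑ ρ : ι → α, (∏ m, q (ρ m)) * ‖∑ k, (q (ρ k))⁻¹ • g (ρ k)‖ ^ 2 =
      Fintype.card ι * ∑ a, ‖g a‖ ^ 2 / q a +
        Fintype.card ι * (Fintype.card ι - 1) * ‖∑ a, g a‖ ^ 2 := by
  have hsecond (a : α) : q a * ‖(q a)⁻¹ • g a‖ ^ 2 = ‖g a‖ ^ 2 / q a := by
    rw [norm_smul, mul_pow, norm_inv, Real.norm_eq_abs, inv_pow, sq_abs]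
    field_simp [hq0 a]
  have hmean (a : α) : q a • (q a)⁻¹ • g a = g a := by
    rw [smul_smul, mul_inv_cancel₀ (hq0 a), one_smul]
  simp only [sum_prod_mul_norm_sum_sq hq fun a => (q a)⁻¹ • g a, hsecond, hmean]

end ProductWeights

theorem sum_card_fiber_nsmul {ι α M : Type*} [Fintype ι] [Fintype α] [DecidableEq α]
    [AddCommMonoid M] (ρ : ι → α) (v : α → M) :
    ∑ a, #{k | ρ k = a} • v a = ∑ k, v (ρ k) := by
  rw [← sum_fiberwise' univ ρ v]
  simp_rw [sum_const]

theorem gradient_const_mul_sum {F ι : Type*} [NormedAddCommGroup F] [InnerProductSpace ℝ F]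
    [CompleteSpace F] {s : Finset ι} {f : ι → F → ℝ} {x : F}
    (hf : ∀ i ∈ s, DifferentiableAt ℝ (f i) x) (c : ℝ) :
    gradient (fun y => c * ∑ i ∈ s, f i y) x = c • ∑ i ∈ s, gradient (f i) x := by
  simp only [gradient, fderiv_const_mul (.fun_sum hf), fderiv_fun_sum hf, map_smul, map_sum]

theorem stmt18_general {d : ℕ} (n τ : ℕ) (hτ : 1 ≤ τ)
    (f : Fin n → EuclideanSpace ℝ (Fin d) → ℝ)
    (hdiff : ∀ i, Differentiable ℝ (f i))
    (F : EuclideanSpace ℝ (Fin d) → ℝ)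
    (hF : F = fun y => (1 / (n : ℝ)) * ∑ i, f i y)
    (q : Fin n → ℝ) (hq : ∀ i, 0 < q i) (hq1 : ∑ i, q i = 1)
    (x : EuclideanSpace ℝ (Fin d)) :
    ∑ ρ : Fin τ → Fin n, (∏ k, q (ρ k)) *
        ‖(1 / (n : ℝ)) • ∑ i,
          (((Finset.univ.filter fun k => ρ k = i).card : ℝ) / (τ * q i)) •
            gradient (f i) x‖ ^ 2
      = (1 - 1 / (τ : ℝ)) * ‖gradient F x‖ ^ 2
        + (1 / (n : ℝ) ^ 2) * ∑ i, ‖gradient (f i) x‖ ^ 2 / (τ * q i) := by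
  have hτ0 : (τ : ℝ) ≠ 0 := Nat.cast_ne_zero.mpr (by omega)
  have hgradF : gradient F x = (1 / (n : ℝ)) • ∑ i, gradient (f i) x := by
    rw [hF]
    exact gradient_const_mul_sum (fun i _ => (hdiff i).differentiableAt) _
  have hsample (ρ : Fin τ → Fin n) :
      (1 / (n : ℝ)) • ∑ i, ((#{k | ρ k = i} : ℝ) / (τ * q i)) • gradient (f i) x =
        ((n : ℝ) * τ)⁻¹ • ∑ k, (q (ρ k))⁻¹ • gradient (f (ρ k)) x := by
    rw [← sum_card_fiber_nsmul ρ fun i => (q i)⁻¹ • gradient (f i) x, smul_sum, smul_sum]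
    refine sum_congr rfl fun i _ => ?_
    rw [← Nat.cast_smul_eq_nsmul ℝ, smul_smul, smul_smul, smul_smul]
    congr 1
    ring
  calc _ = ((n : ℝ) * τ)⁻¹ ^ 2 * ∑ ρ : Fin τ → Fin n,
        (∏ k, q (ρ k)) * ‖∑ k, (q (ρ k))⁻¹ • gradient (f (ρ k)) x‖ ^ 2 := by
        simp only [hsample, norm_smul, mul_pow, Real.norm_eq_abs, inv_pow, sq_abs, mul_sum]
        exact sum_congr rfl fun ρ _ => by ring
    _ = _ := by
        rw [sum_prod_mul_norm_sum_inv_smul_sq hq1 (fun i => (hq i).ne') fun i => gradient (f i) x,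
          hgradF, norm_smul, Fintype.card_fin]
        simp_rw [div_mul_eq_div_div_swap, ← sum_div, Real.norm_eq_abs, mul_pow, sq_abs]
        field_simp
        ring

theorem stmt18 {d : ℕ} (n τ : ℕ) (hn : 0 < n) (hτ : 1 ≤ τ)
    (f : Fin n → EuclideanSpace ℝ (Fin d) → ℝ)
    (hdiff : ∀ i, Differentiable ℝ (f i))
    (F : EuclideanSpace ℝ (Fin d) → ℝ)
    (hF : F = fun y => (1 / (n : ℝ)) * ∑ i, f i y)
    (q : Fin n → ℝ) (hq : ∀ i, 0 < q i) (hq1 : ∑ i, q i = 1)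
    (x : EuclideanSpace ℝ (Fin d)) :
    ∑ ρ : Fin τ → Fin n, (∏ k, q (ρ k)) *
        ‖(1 / (n : ℝ)) • ∑ i,
          (((Finset.univ.filter fun k => ρ k = i).card : ℝ) / (τ * q i)) •
            gradient (f i) x‖ ^ 2
      = (1 - 1 / (τ : ℝ)) * ‖gradient F x‖ ^ 2
        + (1 / (n : ℝ) ^ 2) * ∑ i, ‖gradient (f i) x‖ ^ 2 / (τ * q i) :=
  stmt18_general n τ hτ f hdiff F hF q hq hq1 x
end
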